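/- arXiv:2508.21276 — 7 statements merged into one kernel-verified Lean document; each statement's English description precedes it below -/
import Mathlib

section
/- Let G = (V, E) be a finite simple graph with |V| = n, and let T_G ⊆ (2^V → ℝ) be the subspace of functions T satisfying Σ_{σ : e ∈ δσ} T(σ) = 0 for every edge e (where δσ is the cut of σ). Then dim T_G = 2^n − |E|. -/
/-!
`T_G` is the kernel of the cut-incidence matrix `M : E × 2^V → ℝ`, so by rank–nullity it suffices
that `M` has full row rank `|E|`, i.e. that every edge indicator lies in its image. For an edge
`ij`, the vector `½ (δ_{i} + δ_{j} - δ_{ij})` is a preimage: a singleton `{v}` cuts an edge exactly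
when `v` is one of its endpoints, and `{i, j}` cuts it exactly when it has one endpoint in `{i, j}`,
so the combination is `1` on `ij` and `0` on every other edge.
-/

open Finset Matrix

/-- The space `T_G` of functions `T : 2^V → ℝ` such that for every edge `e` of `G`,
the sum of `T(σ)` over all `σ` whose cut contains `e` vanishes. -/
def TGset {V : Type*} [Fintype V] [DecidableEq V] (G : SimpleGraph V) :
    Set (Finset V → ℝ) :=
  {T | ∀ i j : V, G.Adj i j →
    ∑ σ ∈ Finset.univ.filter
        (fun σ : Finset V => (i ∈ σ ∧ j ∉ σ) ∨ (i ∉ σ ∧ j ∈ σ)), T σ = 0}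

namespace SimpleGraph

variable {V R : Type*} [DecidableEq V]

variable (R) in
def cutIndicator [Zero R] [One R] (σ : Finset V) : Sym2 V → R :=
  Sym2.lift ⟨fun i j => if (i ∈ σ ∧ j ∉ σ) ∨ (i ∉ σ ∧ j ∈ σ) then 1 else 0,
    fun _ _ => if_congr (by tauto) rfl rfl⟩

@[simp]
lemma cutIndicator_mk [Zero R] [One R] (σ : Finset V) (i j : V) :
    cutIndicator R σ s(i, j) = if (i ∈ σ ∧ j ∉ σ) ∨ (i ∉ σ ∧ j ∈ σ) then 1 else 0 :=
  rfl

lemma cutIndicator_singleton_add_singleton_sub_pair [Ring R] {i j a b : V} (hij : i ≠ j)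
    (hab : a ≠ b) :
    cutIndicator R {i} s(a, b) + cutIndicator R {j} s(a, b) - cutIndicator R {i, j} s(a, b)
      = if s(a, b) = s(i, j) then 2 else 0 := by
  by_cases hai : a = i <;> by_cases haj : a = j <;> by_cases hbi : b = i <;>
    by_cases hbj : b = j <;> subst_vars <;> simp_all [one_add_one_eq_two]

variable [Fintype V] (G : SimpleGraph V)

variable (R) in
def cutMatrix [Zero R] [One R] : Matrix G.edgeSet (Finset V) R :=
  Matrix.of fun e σ => cutIndicator R σ e

lemma mulVec_cutMatrix_mk [NonAssocSemiring R] (T : Finset V → R) {i j : V} (h : G.Adj i j) :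
    (cutMatrix R G *ᵥ T) ⟨s(i, j), h⟩
      = ∑ σ ∈ univ.filter (fun σ : Finset V => (i ∈ σ ∧ j ∉ σ) ∨ (i ∉ σ ∧ j ∈ σ)), T σ := by
  simp [cutMatrix, Matrix.mulVec, dotProduct, Finset.sum_filter]

lemma mulVecLin_cutMatrix_surjective [CommRing R] [Invertible (2 : R)] :
    Function.Surjective (cutMatrix R G).mulVecLin := by
  rw [← LinearMap.range_eq_top, eq_top_iff, ← (Pi.basisFun R G.edgeSet).span_eq,
    Submodule.span_le]
  rintro _ ⟨⟨e, he⟩, rfl⟩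
  induction e using Sym2.ind with | _ i j => ?_
  refine ⟨⅟(2 : R) • (Pi.single {i} 1 + Pi.single {j} 1 - Pi.single {i, j} 1), funext ?_⟩
  rintro ⟨f, hf⟩
  induction f using Sym2.ind with | _ a b => ?_
  simp only [mulVecLin_apply, mulVec_smul, mulVec_sub, mulVec_add, mulVec_single, Pi.smul_apply,
    Pi.sub_apply, Pi.add_apply, MulOpposite.op_one, one_smul, col_apply, cutMatrix, of_apply,
    smul_eq_mul, Pi.basisFun_apply, Pi.single_apply, Subtype.mk.injEq,
    cutIndicator_singleton_add_singleton_sub_pair (G.ne_of_adj he) (G.ne_of_adj hf)]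
  split_ifs <;> simp

lemma finrank_ker_mulVecLin_cutMatrix {K : Type*} [Field K] [Invertible (2 : K)]
    [Fintype G.edgeSet] :
    Module.finrank K (LinearMap.ker (cutMatrix K G).mulVecLin)
      = 2 ^ Fintype.card V - Fintype.card G.edgeSet := by
  have h := LinearMap.finrank_range_add_finrank_ker (cutMatrix K G).mulVecLin
  rw [LinearMap.range_eq_top.2 (mulVecLin_cutMatrix_surjective G), finrank_top] at h
  simp only [Module.finrank_fintype_fun_eq_card, Fintype.card_finset] at h
  omega

lemma TGset_eq_ker_cutMatrix : TGset G = LinearMap.ker (cutMatrix ℝ G).mulVecLin := by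
  ext T
  rw [SetLike.mem_coe, LinearMap.mem_ker, mulVecLin_apply, funext_iff, Subtype.forall]
  refine ⟨fun hT e he => ?_, fun hT i j h => ?_⟩
  · induction e using Sym2.ind with | _ i j => exact (G.mulVec_cutMatrix_mk T he).trans (hT i j he)
  · exact (G.mulVec_cutMatrix_mk T h).symm.trans (hT s(i, j) h)

end SimpleGraph

/-- `dim T_G = 2^n − |E|`. -/
theorem stmt_6 {V : Type*} [Fintype V] [DecidableEq V] (G : SimpleGraph V)
    [DecidableRel G.Adj] :
    Module.finrank ℝ ↥(Submodule.span ℝ (TGset G))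
      = 2 ^ (Fintype.card V) - G.edgeFinset.card := by
  rw [G.TGset_eq_ker_cutMatrix, Submodule.span_eq, G.finrank_ker_mulVecLin_cutMatrix,
    G.edgeFinset_card]
end

section
/- Let G = (V, E) be a finite simple graph. The functions χ_0 = χ_∅ + Σ_{e ∈ E} χ_e together with the Fourier characters χ_σ for all σ ⊆ V with σ ≠ ∅ and σ ∉ E (viewing edges as 2-element subsets) form an orthogonal basis of T_G, the space of functions T : 2^V → ℝ satisfying Σ_{σ : e ∈ δσ} T(σ) = 0 for every edge e. -/
open Finset
open scoped symmDiff

/-- Fourier character on the Boolean cube: `χ_σ(τ) = (-1)^{|σ ∩ τ|}`. -/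
def fourierChar' {V : Type*} [DecidableEq V] (σ : Finset V) : Finset V → ℝ :=
  fun τ => (-1 : ℝ) ^ (σ ∩ τ).card

/-- The edges of `G`, viewed as 2-element subsets of `V`. -/
def edgeSets {V : Type*} [Fintype V] [DecidableEq V] (G : SimpleGraph V)
    [DecidableRel G.Adj] : Finset (Finset V) :=
  Finset.univ.filter (fun s : Finset V => ∃ i ∈ s, ∃ j ∈ s, G.Adj i j ∧ s = {i, j})

section Aux

variable {V : Type*} [Fintype V] [DecidableEq V]

set_option linter.unusedSectionVars false

lemma key_sum (ρ : Finset V) :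
    ∑ σ : Finset V, (-1 : ℝ) ^ (σ ∩ ρ).card =
      if ρ = ∅ then (2 : ℝ) ^ Fintype.card V else 0 := by
  have h := Finset.prod_add (fun i : V => if i ∈ ρ then (-1 : ℝ) else 1)
    (fun _ => 1) Finset.univ
  simp only [Finset.prod_const_one, mul_one, Finset.powerset_univ] at h
  have h2 : ∀ t : Finset V, (∏ i ∈ t, if i ∈ ρ then (-1 : ℝ) else 1)
      = (-1 : ℝ) ^ (t ∩ ρ).card := by
    intro t
    rw [Finset.prod_ite, Finset.prod_const, Finset.prod_const, one_pow, mul_one,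
      Finset.filter_mem_eq_inter]
  simp only [h2] at h
  rw [← h]
  by_cases hρ : ρ = ∅
  · subst hρ; simp; norm_num
  · rw [if_neg hρ]
    obtain ⟨i, hi⟩ := Finset.nonempty_iff_ne_empty.2 hρ
    exact Finset.prod_eq_zero (Finset.mem_univ i) (by simp [hi])

lemma card_symmDiff_parity (a b : Finset V) :
    (a ∆ b).card + 2 * (a ∩ b).card = a.card + b.card := by
  have h1 : a ∆ b = (a \ b) ∪ (b \ a) := by
    rw [symmDiff_def]; rfl
  have hd : Disjoint (a \ b) (b \ a) := disjoint_sdiff_sdiff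
  have h2 := Finset.card_union_of_disjoint hd
  have h3 := Finset.card_sdiff_add_card_inter a b
  have h4 := Finset.card_sdiff_add_card_inter b a
  rw [Finset.inter_comm] at h4
  rw [h1, h2]; omega

lemma char_mul (σ τ α : Finset V) :
    fourierChar' σ α * fourierChar' τ α = fourierChar' (σ ∆ τ) α := by
  unfold fourierChar'
  rw [← pow_add]
  have hd : (σ ∆ τ) ∩ α = (σ ∩ α) ∆ (τ ∩ α) := inf_symmDiff_distrib_right σ τ α
  have hp := card_symmDiff_parity (σ ∩ α) (τ ∩ α)
  rw [hd]
  have : (σ ∩ α).card + (τ ∩ α).card =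
      ((σ ∩ α) ∆ (τ ∩ α)).card + 2 * ((σ ∩ α) ∩ (τ ∩ α)).card := hp.symm
  rw [this, pow_add, pow_mul]
  norm_num

lemma orth (σ τ : Finset V) :
    ∑ α : Finset V, fourierChar' σ α * fourierChar' τ α =
      if σ = τ then (2 : ℝ) ^ Fintype.card V else 0 := by
  simp_rw [char_mul]
  unfold fourierChar'
  simp_rw [Finset.inter_comm]
  rw [key_sum]
  congr 1
  simp [symmDiff_eq_bot]

lemma indicator_char (i j : V) (hij : i ≠ j) (σ : Finset V) :
    (if (i ∈ σ ∧ j ∉ σ) ∨ (i ∉ σ ∧ j ∈ σ) then (1:ℝ) else 0)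
      = (1 - fourierChar' {i, j} σ) / 2 := by
  unfold fourierChar'
  by_cases hi : i ∈ σ <;> by_cases hj : j ∈ σ
  · rw [if_neg (by tauto)]
    have : ({i, j} : Finset V) ∩ σ = {i, j} := by
      apply Finset.inter_eq_left.2; intro x hx
      simp at hx; rcases hx with rfl | rfl <;> assumption
    rw [this, Finset.card_pair hij]; norm_num
  · rw [if_pos (by tauto)]
    have : ({i, j} : Finset V) ∩ σ = {i} := by
      ext x; simp; constructor
      · rintro ⟨rfl | rfl, h⟩; rfl; exact absurd h hj
      · rintro rfl; exact ⟨Or.inl rfl, hi⟩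
    rw [this, Finset.card_singleton]; norm_num
  · rw [if_pos (by tauto)]
    have : ({i, j} : Finset V) ∩ σ = {j} := by
      ext x; simp; constructor
      · rintro ⟨rfl | rfl, h⟩; exact absurd h hi; rfl
      · rintro rfl; exact ⟨Or.inr rfl, hj⟩
    rw [this, Finset.card_singleton]; norm_num
  · rw [if_neg (by tauto)]
    have : ({i, j} : Finset V) ∩ σ = ∅ := by
      ext x; simp; rintro (rfl | rfl) <;> assumption
    rw [this]; norm_num

lemma cutsum (i j : V) (hij : i ≠ j) (ρ : Finset V) :
    ∑ σ ∈ Finset.univ.filter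
        (fun σ : Finset V => (i ∈ σ ∧ j ∉ σ) ∨ (i ∉ σ ∧ j ∈ σ)), fourierChar' ρ σ =
      ((if ρ = ∅ then (2:ℝ) ^ Fintype.card V else 0)
        - (if ρ = {i, j} then (2:ℝ) ^ Fintype.card V else 0)) / 2 := by
  rw [Finset.sum_filter]
  have : ∀ σ : Finset V,
      (if (i ∈ σ ∧ j ∉ σ) ∨ (i ∉ σ ∧ j ∈ σ) then fourierChar' ρ σ else 0)
        = (1 - fourierChar' {i, j} σ) / 2 * fourierChar' ρ σ := by
    intro σ
    rw [← indicator_char i j hij σ]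
    by_cases h : (i ∈ σ ∧ j ∉ σ) ∨ (i ∉ σ ∧ j ∈ σ) <;> simp [h]
  simp_rw [this, sub_div, sub_mul, one_div, Finset.sum_sub_distrib]
  have e1 : ∑ x : Finset V, 2⁻¹ * fourierChar' ρ x
      = (if ρ = ∅ then (2:ℝ)^Fintype.card V else 0) / 2 := by
    rw [← Finset.mul_sum]
    unfold fourierChar'
    simp_rw [Finset.inter_comm ρ]
    rw [key_sum]
    ring
  have e2 : ∑ x : Finset V, fourierChar' {i,j} x / 2 * fourierChar' ρ x
      = (if ρ = {i,j} then (2:ℝ)^Fintype.card V else 0) / 2 := by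
    simp_rw [div_mul_eq_mul_div]
    rw [← Finset.sum_div, orth]
    by_cases h : ρ = {i, j}
    · subst h; simp
    · rw [if_neg (fun hh => h hh.symm), if_neg h]
  rw [e1, e2]

lemma inversion (T : Finset V → ℝ) :
    ∑ σ : Finset V, (∑ α : Finset V, fourierChar' σ α * T α) • fourierChar' σ
      = ((2:ℝ) ^ Fintype.card V) • T := by
  funext τ
  simp only [Finset.sum_apply, Pi.smul_apply, smul_eq_mul]
  have step1 : ∑ σ : Finset V, (∑ α : Finset V, fourierChar' σ α * T α) * fourierChar' σ τ
      = ∑ α : Finset V, (∑ σ : Finset V, fourierChar' σ α * fourierChar' σ τ) * T α := by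
    simp_rw [Finset.sum_mul]
    rw [Finset.sum_comm]
    apply Finset.sum_congr rfl
    intro α _
    apply Finset.sum_congr rfl
    intro σ _
    ring
  rw [step1]
  have step2 : ∀ α : Finset V, (∑ σ : Finset V, fourierChar' σ α * fourierChar' σ τ)
      = if α = τ then (2:ℝ) ^ Fintype.card V else 0 := by
    intro α
    rw [← orth α τ]
    apply Finset.sum_congr rfl
    intro σ _
    unfold fourierChar'
    rw [Finset.inter_comm σ α, Finset.inter_comm σ τ]
  simp_rw [step2, ite_mul, zero_mul]
  rw [Finset.sum_ite_eq' Finset.univ τ]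
  simp

end Aux
/-- `χ_0 = χ_∅ + Σ_{e∈E} χ_e` together with the `χ_σ` for `σ ≠ ∅`, `σ ∉ E`
form an orthogonal basis of `T_G`: mutually orthogonal, nonzero, and spanning `T_G`. -/
theorem stmt_7 {V : Type*} [Fintype V] [DecidableEq V] (G : SimpleGraph V)
    [DecidableRel G.Adj] :
    let χ0 : Finset V → ℝ := fourierChar' ∅ + ∑ e ∈ edgeSets G, fourierChar' e
    let B : Set (Finset V → ℝ) :=
      insert χ0 (fourierChar' '' {σ : Finset V | σ ≠ ∅ ∧ σ ∉ edgeSets G})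
    (∀ f ∈ B, ∀ g ∈ B, f ≠ g → ∑ α : Finset V, f α * g α = 0) ∧
    (∀ f ∈ B, f ≠ 0) ∧
    Submodule.span ℝ B = Submodule.span ℝ (TGset G) := by
  intro χ0 B
  have hN : ((2:ℝ) ^ Fintype.card V) ≠ 0 := by positivity
  have hχ0app : ∀ α : Finset V, χ0 α
      = fourierChar' ∅ α + ∑ e ∈ edgeSets G, fourierChar' e α := by
    intro α
    show fourierChar' ∅ α + (∑ e ∈ edgeSets G, fourierChar' e) α = _
    rw [Finset.sum_apply]
  have hedge_mem : ∀ i j : V, G.Adj i j → ({i, j} : Finset V) ∈ edgeSets G := by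
    intro i j h
    simp only [edgeSets, Finset.mem_filter, Finset.mem_univ, true_and]
    exact ⟨i, by simp, j, by simp, h, rfl⟩
  have hedge_ne : ∀ e ∈ edgeSets G, e ≠ ∅ := by
    intro e he
    simp only [edgeSets, Finset.mem_filter] at he
    obtain ⟨-, i, hi, -⟩ := he
    intro h; rw [h] at hi; exact absurd hi (Finset.notMem_empty i)
  have hedge_struct : ∀ e ∈ edgeSets G, ∃ i j : V, G.Adj i j ∧ e = {i, j} := by
    intro e he
    simp only [edgeSets, Finset.mem_filter] at he
    obtain ⟨-, i, -, j, -, hadj, rfl⟩ := he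
    exact ⟨i, j, hadj, rfl⟩
  have hχ0pair : ∀ ρ : Finset V, ρ ≠ ∅ → ρ ∉ edgeSets G →
      ∑ α : Finset V, χ0 α * fourierChar' ρ α = 0 := by
    intro ρ h1 h2
    have expand : ∑ α : Finset V, χ0 α * fourierChar' ρ α
        = (∑ α : Finset V, fourierChar' ∅ α * fourierChar' ρ α)
          + ∑ e ∈ edgeSets G, ∑ α : Finset V, fourierChar' e α * fourierChar' ρ α := by
      simp_rw [hχ0app, add_mul, Finset.sum_mul, Finset.sum_add_distrib]
      rw [Finset.sum_comm]
    rw [expand, orth, if_neg (fun h => h1 h.symm), zero_add]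
    apply Finset.sum_eq_zero
    intro e he
    rw [orth, if_neg]
    intro h; rw [h] at he; exact h2 he
  refine ⟨?_, ?_, ?_⟩
  · -- orthogonality
    intro f hf g hg hfg
    simp only [B, Set.mem_insert_iff, Set.mem_image, Set.mem_setOf_eq] at hf hg
    rcases hf with rfl | ⟨σ, hσ, rfl⟩ <;> rcases hg with rfl | ⟨τ, hτ, rfl⟩
    · exact absurd rfl hfg
    · exact hχ0pair τ hτ.1 hτ.2
    · rw [show (∑ α : Finset V, fourierChar' σ α * χ0 α)
          = ∑ α : Finset V, χ0 α * fourierChar' σ α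
        from Finset.sum_congr rfl (fun α _ => mul_comm _ _)]
      exact hχ0pair σ hσ.1 hσ.2
    · rw [orth, if_neg]
      intro h; exact hfg (by rw [h])
  · -- nonzero
    intro f hf
    simp only [B, Set.mem_insert_iff, Set.mem_image, Set.mem_setOf_eq] at hf
    rcases hf with rfl | ⟨σ, hσ, rfl⟩
    · intro h
      have h0 : χ0 ∅ = 0 := by rw [h]; rfl
      rw [hχ0app ∅] at h0
      have h1 : fourierChar' (∅ : Finset V) ∅ = 1 := by simp [fourierChar']
      have h2 : ∑ e ∈ edgeSets G, fourierChar' e ∅ = ((edgeSets G).card : ℝ) := by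
        rw [Finset.card_eq_sum_ones, Nat.cast_sum]
        apply Finset.sum_congr rfl
        intro e _; simp [fourierChar']
      rw [h1, h2] at h0
      have : (0:ℝ) ≤ ((edgeSets G).card : ℝ) := Nat.cast_nonneg _
      linarith
    · intro h
      have := congrFun h ∅
      simp [fourierChar'] at this
  · -- span equality
    apply le_antisymm
    · -- span B ≤ span TGset : show B ⊆ TGset
      apply Submodule.span_le.2
      intro f hf
      apply Submodule.subset_span
      simp only [B, Set.mem_insert_iff, Set.mem_image, Set.mem_setOf_eq] at hf
      show f ∈ TGset G
      intro i j hadj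
      have hij := G.ne_of_adj hadj
      rcases hf with rfl | ⟨σ, hσ, rfl⟩
      · -- χ0 ∈ TGset
        simp_rw [hχ0app]
        rw [Finset.sum_add_distrib, cutsum i j hij, Finset.sum_comm]
        simp_rw [cutsum i j hij]
        rw [if_pos trivial, if_neg (fun h => (Finset.insert_ne_empty i {j}) h.symm)]
        have key : ∑ e ∈ edgeSets G,
            ((if e = ∅ then (2:ℝ) ^ Fintype.card V else 0)
              - (if e = ({i,j} : Finset V) then (2:ℝ) ^ Fintype.card V else 0)) / 2
            = -(((2:ℝ) ^ Fintype.card V) / 2) := by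
          have step : ∀ e ∈ edgeSets G,
              ((if e = ∅ then (2:ℝ) ^ Fintype.card V else 0)
                - (if e = ({i,j} : Finset V) then (2:ℝ) ^ Fintype.card V else 0)) / 2
              = -((if e = ({i,j} : Finset V) then (2:ℝ) ^ Fintype.card V else 0) / 2) := by
            intro e he
            rw [if_neg (hedge_ne e he)]; ring
          rw [Finset.sum_congr rfl step]
          rw [Finset.sum_neg_distrib, ← Finset.sum_div]
          rw [Finset.sum_ite_eq' (edgeSets G) ({i,j} : Finset V)]
          rw [if_pos (hedge_mem i j hadj)]
        rw [key]; ring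
      · rw [cutsum i j hij, if_neg hσ.1, if_neg, sub_zero, zero_div]
        intro h; rw [h] at hσ; exact hσ.2 (hedge_mem i j hadj)
    · -- span TGset ≤ span B : TGset ⊆ span B
      apply Submodule.span_le.2
      intro T hT
      have hTmem : ∀ i j : V, G.Adj i j →
          ∑ σ ∈ Finset.univ.filter
            (fun σ : Finset V => (i ∈ σ ∧ j ∉ σ) ∨ (i ∉ σ ∧ j ∈ σ)), T σ = 0 := hT
      set c : Finset V → ℝ := fun σ => ∑ α : Finset V, fourierChar' σ α * T α with hc
      have hce : ∀ i j : V, G.Adj i j → c {i, j} = c ∅ := by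
        intro i j hadj
        have hij := G.ne_of_adj hadj
        have h0 := hTmem i j hadj
        have key : c ∅ - c {i, j}
            = 2 * ∑ σ ∈ Finset.univ.filter
                (fun σ : Finset V => (i ∈ σ ∧ j ∉ σ) ∨ (i ∉ σ ∧ j ∈ σ)), T σ := by
          rw [Finset.sum_filter]
          have step : ∀ σ : Finset V,
              (if (i ∈ σ ∧ j ∉ σ) ∨ (i ∉ σ ∧ j ∈ σ) then T σ else 0)
                = (1 - fourierChar' {i, j} σ) / 2 * T σ := by
            intro σ
            rw [← indicator_char i j hij σ]
            by_cases h : (i ∈ σ ∧ j ∉ σ) ∨ (i ∉ σ ∧ j ∈ σ) <;> simp [h]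
          simp_rw [step]
          rw [hc]
          simp only []
          rw [Finset.mul_sum, ← Finset.sum_sub_distrib]
          apply Finset.sum_congr rfl
          intro σ _
          have h1 : fourierChar' (∅ : Finset V) σ = 1 := by simp [fourierChar']
          rw [h1]; ring
        rw [h0, mul_zero] at key
        linarith
      have hrep : T = ((2:ℝ) ^ Fintype.card V)⁻¹ •
          ∑ σ : Finset V, c σ • fourierChar' σ := by
        rw [hc]
        simp only []
        rw [inversion T, smul_smul, inv_mul_cancel₀ hN, one_smul]
      rw [hrep]
      apply Submodule.smul_mem
      rw [← Finset.sum_filter_add_sum_filter_not Finset.univ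
        (fun σ : Finset V => σ = ∅ ∨ σ ∈ edgeSets G)]
      apply Submodule.add_mem
      · -- this part equals c ∅ • χ0
        have hfilter : Finset.univ.filter (fun σ : Finset V => σ = ∅ ∨ σ ∈ edgeSets G)
            = insert ∅ (edgeSets G) := by
          ext σ; simp [Finset.mem_insert]
        rw [hfilter, Finset.sum_insert (fun h => hedge_ne ∅ h rfl)]
        have step : ∑ σ ∈ edgeSets G, c σ • fourierChar' σ
            = ∑ σ ∈ edgeSets G, c ∅ • fourierChar' σ := by
          apply Finset.sum_congr rfl
          intro e he
          obtain ⟨i, j, hadj, rfl⟩ := hedge_struct e he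
          rw [hce i j hadj]
        rw [step, ← Finset.smul_sum, ← smul_add]
        have hX : (fourierChar' (∅ : Finset V) + ∑ σ ∈ edgeSets G, fourierChar' σ) = χ0 := rfl
        rw [hX]
        exact Submodule.smul_mem _ _ (Submodule.subset_span (Set.mem_insert _ _))
      · apply Submodule.sum_mem
        intro σ hσ
        simp only [Finset.mem_filter, not_or] at hσ
        apply Submodule.smul_mem
        apply Submodule.subset_span
        exact Set.mem_insert_of_mem _ ⟨σ, ⟨hσ.2.1, hσ.2.2⟩, rfl⟩
end

section
/- Let G = (V, E) be a finite simple graph. The orthogonal complement of T_G in (2^V → ℝ) is spanned by the functions χ̂_e = (χ_e − χ_∅)/2 for e ∈ E, where χ_σ(τ) = (-1)^{|σ ∩ τ|}. -/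
/-!
Identify `Finset V → ℝ` with its dual through the dot product. In finite dimension a subspace is
the annihilator of its annihilator, so it suffices to see that `T_G` is the annihilator of the
`χ̂_e`. For `e = {i, j}`, `χ_e(τ) = (-1)^([i ∈ τ] + [j ∈ τ])`, so `χ̂_e` is `-1` on the sets `τ`
whose cut contains `e` and `0` elsewhere; hence `χ̂_e ⬝ᵥ S = -∑_{e ∈ δσ} S(σ)`.
-/

open Finset

theorem Submodule.mem_span_iff_forall_dotProduct_eq_zero {K ι : Type*} [Field K] [Fintype ι]
    (s : Set (ι → K)) (v : ι → K) :
    v ∈ span K s ↔ ∀ w : ι → K, (∀ u ∈ s, u ⬝ᵥ w = 0) → v ⬝ᵥ w = 0 := by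
  classical
  rw [← Subspace.forall_mem_dualAnnihilator_apply_eq_zero_iff, Iff.comm]
  refine (dotProductEquiv K ι).toEquiv.forall_congr fun w => ?_
  rw [← SetLike.mem_coe, coe_dualAnnihilator_span]
  simp [Set.subset_def, dotProduct_comm]

lemma fourierChar'_pair_sub_empty {V : Type*} [DecidableEq V] {i j : V} (hij : i ≠ j)
    (τ : Finset V) :
    fourierChar' {i, j} τ - fourierChar' ∅ τ
      = if (i ∈ τ ∧ j ∉ τ) ∨ (i ∉ τ ∧ j ∈ τ) then -2 else 0 := by
  by_cases hi : i ∈ τ <;> by_cases hj : j ∈ τ <;>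
    norm_num [fourierChar', Finset.insert_inter_of_mem, Finset.insert_inter_of_notMem, hi, hj, hij]

lemma mem_edgeSets {V : Type*} [Fintype V] [DecidableEq V] {G : SimpleGraph V}
    [DecidableRel G.Adj] {e : Finset V} :
    e ∈ edgeSets G ↔ ∃ i j, G.Adj i j ∧ e = {i, j} := by
  simp only [edgeSets, Finset.mem_filter, Finset.mem_univ, true_and]
  constructor
  · rintro ⟨i, -, j, -, hij, rfl⟩
    exact ⟨i, j, hij, rfl⟩
  · rintro ⟨i, j, hij, rfl⟩
    exact ⟨i, by simp, j, by simp, hij, rfl⟩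

lemma half_smul_fourierChar'_pair_sub_empty_dotProduct {V : Type*} [Fintype V] [DecidableEq V]
    {i j : V} (hij : i ≠ j) (S : Finset V → ℝ) :
    ((1 / 2 : ℝ) • (fourierChar' {i, j} - fourierChar' ∅)) ⬝ᵥ S
      = -∑ σ ∈ univ.filter (fun σ : Finset V => (i ∈ σ ∧ j ∉ σ) ∨ (i ∉ σ ∧ j ∈ σ)), S σ := by
  rw [← Finset.sum_neg_distrib, Finset.sum_filter, dotProduct]
  refine Finset.sum_congr rfl fun τ _ => ?_
  rw [Pi.smul_apply, Pi.sub_apply, fourierChar'_pair_sub_empty hij]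
  split_ifs <;> simp

def edgeHatChars {V : Type*} [Fintype V] [DecidableEq V] (G : SimpleGraph V)
    [DecidableRel G.Adj] : Set (Finset V → ℝ) :=
  {f | ∃ e ∈ edgeSets G, f = (1 / 2 : ℝ) • (fourierChar' e - fourierChar' ∅)}

lemma mem_TGset_iff_forall_dotProduct_eq_zero {V : Type*} [Fintype V] [DecidableEq V]
    {G : SimpleGraph V} [DecidableRel G.Adj] {S : Finset V → ℝ} :
    S ∈ TGset G ↔ ∀ u ∈ edgeHatChars G, u ⬝ᵥ S = 0 := by
  constructor
  · rintro hS _ ⟨e, he, rfl⟩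
    obtain ⟨i, j, hij, rfl⟩ := mem_edgeSets.1 he
    rw [half_smul_fourierChar'_pair_sub_empty_dotProduct hij.ne, hS i j hij, neg_zero]
  · intro h i j hij
    have := h _ ⟨{i, j}, mem_edgeSets.2 ⟨i, j, hij, rfl⟩, rfl⟩
    rwa [half_smul_fourierChar'_pair_sub_empty_dotProduct hij.ne, neg_eq_zero] at this

/-- The orthogonal complement of `T_G` is spanned by `χ̂_e = (χ_e − χ_∅)/2`, `e ∈ E`. -/
theorem stmt_8 {V : Type*} [Fintype V] [DecidableEq V] (G : SimpleGraph V)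
    [DecidableRel G.Adj] :
    (↑(Submodule.span ℝ
        {f : Finset V → ℝ | ∃ e ∈ edgeSets G,
          f = (1 / 2 : ℝ) • (fourierChar' e - fourierChar' ∅)}) : Set (Finset V → ℝ))
      = {T : Finset V → ℝ | ∀ S ∈ TGset G, ∑ α : Finset V, T α * S α = 0} := by
  ext T
  exact (Submodule.mem_span_iff_forall_dotProduct_eq_zero (edgeHatChars G) T).trans
    (forall_congr' fun _ => imp_congr mem_TGset_iff_forall_dotProduct_eq_zero.symm Iff.rfl)
end

section
/- Let G = (V, E) be a finite simple graph. The span of the following functions equals T_G: (1) T_0 = [∅]; (2) T_σ = [σ] − [σᶜ] for all σ ⊆ V; (3) T_{σ,τ} = [σ] + [τ] − [σ∪τ] for all disjoint σ, τ with no edge between them; (4) T_{σ,τ,υ} = [σ] + [τ] + [υ] − [σ∪τ] − [σ∪υ] − [τ∪υ] + [σ∪τ∪υ] for all pairwise disjoint σ, τ, υ. -/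
open Finset

/-- Indicator function of the subset `σ` on the Boolean cube. -/
def indFn {V : Type*} [DecidableEq V] (σ : Finset V) : Finset V → ℝ :=
  fun τ => if τ = σ then 1 else 0

set_option linter.unusedSectionVars false


section
variable {V : Type*} [Fintype V] [DecidableEq V] (ℓ : Finset V → ℝ)

noncomputable def bb (ℓ : Finset V → ℝ) (i j : V) : ℝ :=
  if i = j then 0 else ℓ {i, j} - ℓ {i} - ℓ {j}

lemma bb_symm (i j : V) : bb ℓ i j = bb ℓ j i := by
  unfold bb
  rcases eq_or_ne i j with h | h
  · simp [h]
  · rw [if_neg h, if_neg (Ne.symm h), Finset.pair_comm]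
    ring

noncomputable def QQ (ℓ : Finset V → ℝ) (A : Finset V) : ℝ := ∑ i ∈ A, ∑ j ∈ A, bb ℓ i j

lemma QQ_insert {A : Finset V} {k : V} (hk : k ∉ A) :
    QQ ℓ (insert k A) = QQ ℓ A + 2 * ∑ j ∈ A, bb ℓ k j := by
  unfold QQ
  rw [Finset.sum_insert hk]
  rw [Finset.sum_insert hk]
  have : ∀ i ∈ A, ∑ j ∈ insert k A, bb ℓ i j = bb ℓ i k + ∑ j ∈ A, bb ℓ i j := by
    intro i hi; rw [Finset.sum_insert hk]
  rw [Finset.sum_congr rfl this, Finset.sum_add_distrib]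
  have : ∑ i ∈ A, bb ℓ i k = ∑ i ∈ A, bb ℓ k i := by
    exact Finset.sum_congr rfl fun i _ => bb_symm ℓ i k
  rw [this]
  simp [bb]
  ring
end

section
set_option linter.unusedSectionVars false
variable {V : Type*} [Fintype V] [DecidableEq V] {G : SimpleGraph V} {ℓ : Finset V → ℝ}

lemma claimA (h0 : ℓ ∅ = 0)
    (h4 : ∀ σ τ υ : Finset V, Disjoint σ τ → Disjoint σ υ → Disjoint τ υ →
      ℓ σ + ℓ τ + ℓ υ - ℓ (σ ∪ τ) - ℓ (σ ∪ υ) - ℓ (τ ∪ υ) + ℓ (σ ∪ τ ∪ υ) = 0) :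
    ∀ (n : ℕ) (α : Finset V), α.card = n → ℓ α = (∑ i ∈ α, ℓ {i}) + QQ ℓ α / 2 := by
  intro n
  induction n using Nat.strong_induction_on with
  | _ n IH =>
    intro α hcard
    match n, hcard with
    | 0, hcard =>
      obtain rfl := Finset.card_eq_zero.mp hcard
      simp [QQ, h0]
    | 1, hcard =>
      obtain ⟨i, rfl⟩ := Finset.card_eq_one.mp hcard
      simp [QQ, bb]
    | 2, hcard =>
      obtain ⟨i, j, hij, rfl⟩ := Finset.card_eq_two.mp hcard
      have hQ : QQ ℓ {i, j} = 2 * bb ℓ i j := by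
        unfold QQ
        rw [Finset.sum_pair hij, Finset.sum_pair hij, Finset.sum_pair hij]
        have := bb_symm ℓ i j
        simp [bb, hij, hij.symm] at *
        linarith
      rw [hQ, Finset.sum_pair hij]
      simp [bb, hij]
    | (m+3), hcard =>
      -- pick k ∈ α
      have hne : α.Nonempty := Finset.card_pos.mp (by omega)
      obtain ⟨k, hk⟩ := hne
      set β := α.erase k with hβ
      have hβcard : β.card = m + 2 := by
        rw [hβ, Finset.card_erase_of_mem hk, hcard]; omega
      have hβne : β.Nonempty := Finset.card_pos.mp (by omega)
      obtain ⟨l, hl⟩ := hβne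
      set τ := β.erase l with hτ
      have hτcard : τ.card = m + 1 := by
        rw [hτ, Finset.card_erase_of_mem hl, hβcard]; omega
      have hlk : l ≠ k := (Finset.mem_erase.mp hl).1
      have hlτ : l ∉ τ := Finset.notMem_erase l β
      have hkβ : k ∉ β := Finset.notMem_erase k α
      have hkτ : k ∉ τ := fun h => hkβ (Finset.erase_subset l β h)
      have d1 : Disjoint ({l} : Finset V) τ := Finset.disjoint_singleton_left.mpr hlτ
      have d2 : Disjoint ({l} : Finset V) {k} := by
        rw [Finset.disjoint_singleton_left]; simp [hlk]
      have d3 : Disjoint τ ({k} : Finset V) := Finset.disjoint_singleton_right.mpr hkτ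
      have e1 : ({l} : Finset V) ∪ τ = β := by
        rw [← Finset.insert_eq, hτ, Finset.insert_erase hl]
      have e2 : ({l} : Finset V) ∪ {k} = {l, k} := by
        rw [← Finset.insert_eq]
      have e3 : τ ∪ ({k} : Finset V) = insert k τ := by
        rw [Finset.union_comm, ← Finset.insert_eq]
      have e4 : β ∪ ({k} : Finset V) = α := by
        rw [Finset.union_comm, ← Finset.insert_eq, hβ, Finset.insert_erase hk]
      have E0 := h4 {l} τ {k} d1 d2 d3
      rw [e1, e2, e3, e4] at E0
      -- IH applications
      have Iτ := IH (m+1) (by omega) τ hτcard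
      have Iβ := IH (m+2) (by omega) β hβcard
      have Ilk := IH 2 (by omega) {l, k} (Finset.card_pair hlk)
      have Iikτ := IH (m+2) (by omega) (insert k τ)
        (by rw [Finset.card_insert_of_notMem hkτ, hτcard])
      -- expansions
      have hβi : β = insert l τ := by rw [hτ, Finset.insert_erase hl]
      have hαi : α = insert k β := by rw [hβ, Finset.insert_erase hk]
      have sβ : ∑ i ∈ β, ℓ {i} = ℓ {l} + ∑ i ∈ τ, ℓ {i} := by
        rw [hβi, Finset.sum_insert hlτ]
      have sα : ∑ i ∈ α, ℓ {i} = ℓ {k} + ∑ i ∈ β, ℓ {i} := by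
        rw [hαi, Finset.sum_insert hkβ]
      have slk : ∑ i ∈ ({l, k} : Finset V), ℓ {i} = ℓ {l} + ℓ {k} :=
        Finset.sum_pair hlk
      have sikτ : ∑ i ∈ insert k τ, ℓ {i} = ℓ {k} + ∑ i ∈ τ, ℓ {i} :=
        Finset.sum_insert hkτ
      have qβ : QQ ℓ β = QQ ℓ τ + 2 * ∑ j ∈ τ, bb ℓ l j := by
        rw [hβi, QQ_insert ℓ hlτ]
      have qα : QQ ℓ α = QQ ℓ β + 2 * (bb ℓ k l + ∑ j ∈ τ, bb ℓ k j) := by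
        rw [hαi, QQ_insert ℓ hkβ, hβi, Finset.sum_insert hlτ]
      have qlk : QQ ℓ ({l, k} : Finset V) = 2 * bb ℓ l k := by
        have hlnk : l ∉ ({k} : Finset V) := by simp [hlk]
        have : ({l, k} : Finset V) = insert l {k} := rfl
        rw [this, QQ_insert ℓ hlnk]
        simp [QQ, bb]
      have qikτ : QQ ℓ (insert k τ) = QQ ℓ τ + 2 * ∑ j ∈ τ, bb ℓ k j :=
        QQ_insert ℓ hkτ
      have hbs : bb ℓ l k = bb ℓ k l := bb_symm ℓ l k
      rw [sα, sβ, qα, qβ]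
      rw [slk, qlk] at Ilk
      rw [sikτ, qikτ] at Iikτ
      rw [sβ, qβ] at Iβ
      linarith [Iτ, Iβ, Ilk, Iikτ, E0, hbs]
end

section
set_option linter.unusedSectionVars false
variable {V : Type*} [Fintype V] [DecidableEq V] {G : SimpleGraph V} {ℓ : Finset V → ℝ}

lemma bzero (h3 : ∀ σ τ : Finset V, Disjoint σ τ → (∀ i ∈ σ, ∀ j ∈ τ, ¬ G.Adj i j) →
      ℓ σ + ℓ τ = ℓ (σ ∪ τ))
    {i j : V} (hij : i ≠ j) (hadj : ¬ G.Adj i j) : bb ℓ i j = 0 := by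
  have hd : Disjoint ({i} : Finset V) {j} := by
    rw [Finset.disjoint_singleton_left]; simp [hij]
  have hcr : ∀ i' ∈ ({i} : Finset V), ∀ j' ∈ ({j} : Finset V), ¬ G.Adj i' j' := by
    intro i' hi' j' hj'
    rw [Finset.mem_singleton] at hi' hj'
    rw [hi', hj']; exact hadj
  have := h3 {i} {j} hd hcr
  rw [← Finset.insert_eq] at this
  unfold bb
  rw [if_neg hij]
  linarith

lemma claimB (h0 : ℓ ∅ = 0)
    (h2 : ∀ σ : Finset V, ℓ σ = ℓ σᶜ)
    (h4 : ∀ σ τ υ : Finset V, Disjoint σ τ → Disjoint σ υ → Disjoint τ υ →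
      ℓ σ + ℓ τ + ℓ υ - ℓ (σ ∪ τ) - ℓ (σ ∪ υ) - ℓ (τ ∪ υ) + ℓ (σ ∪ τ ∪ υ) = 0)
    (i : V) : ∑ j ∈ univ, bb ℓ i j = -2 * ℓ {i} := by
  have huniv : ℓ (univ : Finset V) = 0 := by
    have := h2 ∅
    rw [Finset.compl_empty] at this
    rw [← this, h0]
  have Auniv := claimA h0 h4 (univ : Finset V).card univ rfl
  have Aerase := claimA h0 h4 ((univ : Finset V).erase i).card _ rfl
  have hsingle : ℓ {i} = ℓ ((univ : Finset V).erase i) := by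
    have := h2 {i}
    rwa [Finset.compl_singleton] at this
  have hins : (univ : Finset V) = insert i (univ.erase i) :=
    (Finset.insert_erase (Finset.mem_univ i)).symm
  have hni : i ∉ (univ : Finset V).erase i := Finset.notMem_erase i univ
  have sE : ∑ j ∈ (univ : Finset V), ℓ {j} = ℓ {i} + ∑ j ∈ univ.erase i, ℓ {j} := by
    conv_lhs => rw [hins]
    rw [Finset.sum_insert hni]
  have qE : QQ ℓ (univ : Finset V) = QQ ℓ (univ.erase i) + 2 * ∑ j ∈ univ.erase i, bb ℓ i j := by
    conv_lhs => rw [hins]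
    rw [QQ_insert ℓ hni]
  have bE : ∑ j ∈ (univ : Finset V), bb ℓ i j = ∑ j ∈ univ.erase i, bb ℓ i j := by
    conv_lhs => rw [hins]
    rw [Finset.sum_insert hni]
    simp [bb]
  rw [bE]
  rw [huniv] at Auniv
  rw [← hsingle] at Aerase
  linarith [Auniv, Aerase, sE, qE]
end

section
set_option linter.unusedSectionVars false
variable {V : Type*} [Fintype V] [DecidableEq V] {G : SimpleGraph V}

lemma sum_ind (g : V → ℝ) (α : Finset V) :
    ∑ i ∈ α, g i = ∑ i ∈ univ, if i ∈ α then g i else 0 := by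
  rw [Finset.sum_ite_mem]; simp

lemma keylemma (T ℓ : Finset V → ℝ)
    (hT : ∀ i j : V, G.Adj i j →
      ∑ σ ∈ Finset.univ.filter
        (fun σ : Finset V => (i ∈ σ ∧ j ∉ σ) ∨ (i ∉ σ ∧ j ∈ σ)), T σ = 0)
    (h0 : ℓ ∅ = 0)
    (h2 : ∀ σ : Finset V, ℓ σ = ℓ σᶜ)
    (h3 : ∀ σ τ : Finset V, Disjoint σ τ → (∀ i ∈ σ, ∀ j ∈ τ, ¬ G.Adj i j) →
      ℓ σ + ℓ τ = ℓ (σ ∪ τ))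
    (h4 : ∀ σ τ υ : Finset V, Disjoint σ τ → Disjoint σ υ → Disjoint τ υ →
      ℓ σ + ℓ τ + ℓ υ - ℓ (σ ∪ τ) - ℓ (σ ∪ υ) - ℓ (τ ∪ υ) + ℓ (σ ∪ τ ∪ υ) = 0) :
    ∑ α : Finset V, T α * ℓ α = 0 := by
  set W : V → ℝ := fun i => ∑ α : Finset V, if i ∈ α then T α else 0 with hW
  set Wp : V → V → ℝ := fun i j => ∑ α : Finset V, if i ∈ α ∧ j ∈ α then T α else 0 with hWp
  -- cut identity
  have hcut : ∀ i j : V, G.Adj i j → W i + W j - 2 * Wp i j = 0 := by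
    intro i j hadj
    have h := hT i j hadj
    rw [Finset.sum_filter] at h
    have : ∀ α : Finset V,
        (if (i ∈ α ∧ j ∉ α) ∨ (i ∉ α ∧ j ∈ α) then T α else 0)
        = (if i ∈ α then T α else 0) + (if j ∈ α then T α else 0)
          - 2 * (if i ∈ α ∧ j ∈ α then T α else 0) := by
      intro α
      by_cases h1 : i ∈ α <;> by_cases h2 : j ∈ α <;> simp [h1, h2] <;> ring
    rw [Finset.sum_congr rfl (fun α _ => this α)] at h
    rw [Finset.sum_sub_distrib, Finset.sum_add_distrib, ← Finset.mul_sum] at h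
    rw [hW, hWp]
    simpa using h
  have hzero : ∀ i j : V, bb ℓ i j * (W i + W j - 2 * Wp i j) = 0 := by
    intro i j
    rcases eq_or_ne i j with rfl | hij
    · simp [bb]
    · by_cases hadj : G.Adj i j
      · rw [hcut i j hadj, mul_zero]
      · rw [bzero h3 hij hadj, zero_mul]
  -- rewrite each term
  have hQind : ∀ α : Finset V, QQ ℓ α
      = ∑ i ∈ univ, ∑ j ∈ univ, if i ∈ α ∧ j ∈ α then bb ℓ i j else 0 := by
    intro α
    unfold QQ
    rw [sum_ind (fun i => ∑ j ∈ α, bb ℓ i j) α]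
    refine Finset.sum_congr rfl fun i _ => ?_
    by_cases hi : i ∈ α
    · rw [if_pos hi, sum_ind (fun j => bb ℓ i j) α]
      exact Finset.sum_congr rfl fun j _ => by by_cases hj : j ∈ α <;> simp [hi, hj]
    · rw [if_neg hi]
      refine (Finset.sum_eq_zero fun j _ => ?_).symm
      simp [hi]
  have step1 : ∀ α : Finset V, T α * ℓ α
      = (∑ i ∈ univ, if i ∈ α then T α * ℓ {i} else 0)
        + (1/2) * ∑ i ∈ univ, ∑ j ∈ univ, (if i ∈ α ∧ j ∈ α then T α * bb ℓ i j else 0) := by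
    intro α
    rw [claimA h0 h4 α.card α rfl, hQind α]
    rw [sum_ind (fun i => ℓ {i}) α]
    rw [mul_add, Finset.mul_sum]
    have e1 : ∀ i ∈ univ, T α * (if i ∈ α then ℓ {i} else 0)
        = (if i ∈ α then T α * ℓ {i} else 0) := by
      intro i _; split <;> ring
    rw [Finset.sum_congr rfl e1]
    congr 1
    rw [div_eq_mul_one_div, mul_comm (∑ i ∈ univ, ∑ j ∈ univ, _) (1/2 : ℝ), ← mul_assoc]
    rw [mul_comm (T α) (1/2 : ℝ), mul_assoc, Finset.mul_sum]
    congr 1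
    refine Finset.sum_congr rfl fun i _ => ?_
    rw [Finset.mul_sum]
    refine Finset.sum_congr rfl fun j _ => ?_
    split <;> ring
  rw [Finset.sum_congr rfl (fun α _ => step1 α)]
  rw [Finset.sum_add_distrib, ← Finset.mul_sum]
  -- swap sums
  rw [Finset.sum_comm]
  have swap2 : ∑ α : Finset V, ∑ i ∈ univ, ∑ j ∈ univ, (if i ∈ α ∧ j ∈ α then T α * bb ℓ i j else 0)
      = ∑ i ∈ univ, ∑ j ∈ univ, ∑ α : Finset V, (if i ∈ α ∧ j ∈ α then T α * bb ℓ i j else 0) := by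
    rw [Finset.sum_comm]
    exact Finset.sum_congr rfl fun i _ => Finset.sum_comm
  rw [swap2]
  have inner1 : ∀ i : V, ∑ α : Finset V, (if i ∈ α then T α * ℓ {i} else 0) = W i * ℓ {i} := by
    intro i
    rw [hW]
    rw [Finset.sum_mul]
    exact Finset.sum_congr rfl fun α _ => by split <;> ring
  have inner2 : ∀ i j : V, ∑ α : Finset V, (if i ∈ α ∧ j ∈ α then T α * bb ℓ i j else 0)
      = Wp i j * bb ℓ i j := by
    intro i j
    rw [hWp, Finset.sum_mul]
    exact Finset.sum_congr rfl fun α _ => by split <;> ring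
  rw [Finset.sum_congr rfl (fun i _ => inner1 i)]
  rw [Finset.sum_congr rfl (fun i _ =>
    Finset.sum_congr rfl (fun j _ => inner2 i j))]
  -- final algebra
  have hB : ∀ i : V, ∑ j ∈ univ, bb ℓ i j = -2 * ℓ {i} := claimB h0 h2 h4
  have main0 : ∑ i ∈ univ, ∑ j ∈ univ, bb ℓ i j * (W i + W j - 2 * Wp i j) = 0 :=
    Finset.sum_eq_zero fun i _ => Finset.sum_eq_zero fun j _ => hzero i j
  have expand : ∑ i ∈ univ, ∑ j ∈ univ, bb ℓ i j * (W i + W j - 2 * Wp i j)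
      = (∑ i ∈ univ, (-2 * ℓ {i}) * W i) + (∑ i ∈ univ, (-2 * ℓ {i}) * W i)
        - 2 * ∑ i ∈ univ, ∑ j ∈ univ, Wp i j * bb ℓ i j := by
    have e : ∀ i ∈ univ, ∑ j ∈ univ, bb ℓ i j * (W i + W j - 2 * Wp i j)
        = (∑ j ∈ univ, bb ℓ i j * W i) + (∑ j ∈ univ, bb ℓ i j * W j)
          - 2 * ∑ j ∈ univ, Wp i j * bb ℓ i j := by
      intro i _
      have e0 : ∀ j ∈ univ, bb ℓ i j * (W i + W j - 2 * Wp i j)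
          = (bb ℓ i j * W i + bb ℓ i j * W j) - 2 * (Wp i j * bb ℓ i j) := fun j _ => by ring
      rw [Finset.sum_congr rfl e0, Finset.sum_sub_distrib, Finset.sum_add_distrib,
        ← Finset.mul_sum]
    rw [Finset.sum_congr rfl e, Finset.sum_sub_distrib, Finset.sum_add_distrib, ← Finset.mul_sum]
    congr 2
    · refine Finset.sum_congr rfl fun i _ => ?_
      rw [← Finset.sum_mul, hB i]
    · rw [Finset.sum_comm]
      refine Finset.sum_congr rfl fun j _ => ?_
      have : ∀ i ∈ univ, bb ℓ i j * W j = bb ℓ j i * W j := fun i _ => by rw [bb_symm]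
      rw [Finset.sum_congr rfl this, ← Finset.sum_mul, hB j]
  rw [expand] at main0
  have hfin : ∑ i ∈ univ, ∑ j ∈ univ, Wp i j * bb ℓ i j
      = -2 * ∑ i ∈ univ, W i * ℓ {i} := by
    have : ∑ i ∈ univ, (-2 * ℓ {i}) * W i = -2 * ∑ i ∈ univ, W i * ℓ {i} := by
      rw [Finset.mul_sum]
      exact Finset.sum_congr rfl fun i _ => by ring
    rw [this] at main0
    linarith
  rw [hfin]
  ring
end

section EasyDir
variable {V : Type*} [Fintype V] [DecidableEq V] {G : SimpleGraph V}

lemma sum_filter_ind (P : Finset V → Prop) [DecidablePred P] (ρ : Finset V) :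
    ∑ σ ∈ univ.filter P, indFn ρ σ = if P ρ then 1 else 0 := by
  unfold indFn
  rw [Finset.sum_ite_eq' (univ.filter P) ρ (fun _ => (1:ℝ))]
  simp

lemma easy_subset (G : SimpleGraph V) :
    ({indFn ∅}
        ∪ {f : Finset V → ℝ | ∃ σ : Finset V, f = indFn σ - indFn σᶜ}
        ∪ {f : Finset V → ℝ | ∃ σ τ : Finset V, Disjoint σ τ ∧
            (∀ i ∈ σ, ∀ j ∈ τ, ¬ G.Adj i j) ∧
            f = indFn σ + indFn τ - indFn (σ ∪ τ)}
        ∪ {f : Finset V → ℝ | ∃ σ τ υ : Finset V,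
            Disjoint σ τ ∧ Disjoint σ υ ∧ Disjoint τ υ ∧
            f = indFn σ + indFn τ + indFn υ - indFn (σ ∪ τ) - indFn (σ ∪ υ)
                - indFn (τ ∪ υ) + indFn (σ ∪ τ ∪ υ)}) ⊆ TGset G := by
  rintro g (((hg | ⟨σ, rfl⟩) | ⟨σ, τ, hd, hcr, rfl⟩) | ⟨σ, τ, υ, d12, d13, d23, rfl⟩)
  · rw [Set.mem_singleton_iff] at hg
    subst hg
    intro i j hadj
    rw [sum_filter_ind]
    simp
  · intro i j hadj
    simp only [Pi.sub_apply, Finset.sum_sub_distrib, sum_filter_ind]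
    by_cases h1 : i ∈ σ <;> by_cases h2 : j ∈ σ <;>
      simp [h1, h2, Finset.mem_compl]
  · intro i j hadj
    simp only [Pi.sub_apply, Pi.add_apply, Finset.sum_sub_distrib,
      Finset.sum_add_distrib, sum_filter_ind]
    have hdl : ∀ x, x ∈ σ → x ∉ τ := fun x hx => Finset.disjoint_left.mp hd hx
    by_cases h1 : i ∈ σ <;> by_cases h3 : i ∈ τ <;> by_cases h2 : j ∈ σ <;>
      by_cases h4 : j ∈ τ <;>
      first
        | exact absurd h3 (hdl i h1)
        | exact absurd h4 (hdl j h2)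
        | exact absurd hadj (hcr i h1 j h4)
        | exact absurd hadj.symm (hcr j h2 i h3)
        | simp [h1, h2, h3, h4, Finset.mem_union]
  · intro i j hadj
    simp only [Pi.sub_apply, Pi.add_apply, Finset.sum_sub_distrib,
      Finset.sum_add_distrib, sum_filter_ind]
    have d1 : ∀ x, x ∈ σ → x ∉ τ := fun x hx => Finset.disjoint_left.mp d12 hx
    have d2 : ∀ x, x ∈ σ → x ∉ υ := fun x hx => Finset.disjoint_left.mp d13 hx
    have d3 : ∀ x, x ∈ τ → x ∉ υ := fun x hx => Finset.disjoint_left.mp d23 hx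
    by_cases h1 : i ∈ σ <;> by_cases h3 : i ∈ τ <;> by_cases h5 : i ∈ υ <;>
      by_cases h2 : j ∈ σ <;> by_cases h4 : j ∈ τ <;> by_cases h6 : j ∈ υ <;>
      first
        | exact absurd h3 (d1 i h1)
        | exact absurd h5 (d2 i h1)
        | exact absurd h5 (d3 i h3)
        | exact absurd h4 (d1 j h2)
        | exact absurd h6 (d2 j h2)
        | exact absurd h6 (d3 j h4)
        | simp [h1, h2, h3, h4, h5, h6, Finset.mem_union]

end EasyDir

/-- The four families of information-basis functions span exactly `T_G`. -/
theorem stmt_12 {V : Type*} [Fintype V] [DecidableEq V] (G : SimpleGraph V) :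
    Submodule.span ℝ
      ({indFn ∅}
        ∪ {f : Finset V → ℝ | ∃ σ : Finset V, f = indFn σ - indFn σᶜ}
        ∪ {f : Finset V → ℝ | ∃ σ τ : Finset V, Disjoint σ τ ∧
            (∀ i ∈ σ, ∀ j ∈ τ, ¬ G.Adj i j) ∧
            f = indFn σ + indFn τ - indFn (σ ∪ τ)}
        ∪ {f : Finset V → ℝ | ∃ σ τ υ : Finset V,
            Disjoint σ τ ∧ Disjoint σ υ ∧ Disjoint τ υ ∧
            f = indFn σ + indFn τ + indFn υ - indFn (σ ∪ τ) - indFn (σ ∪ υ)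
                - indFn (τ ∪ υ) + indFn (σ ∪ τ ∪ υ)})
      = Submodule.span ℝ (TGset G) := by
  set S : Set (Finset V → ℝ) :=
    ({indFn ∅}
        ∪ {f : Finset V → ℝ | ∃ σ : Finset V, f = indFn σ - indFn σᶜ}
        ∪ {f : Finset V → ℝ | ∃ σ τ : Finset V, Disjoint σ τ ∧
            (∀ i ∈ σ, ∀ j ∈ τ, ¬ G.Adj i j) ∧
            f = indFn σ + indFn τ - indFn (σ ∪ τ)}
        ∪ {f : Finset V → ℝ | ∃ σ τ υ : Finset V,
            Disjoint σ τ ∧ Disjoint σ υ ∧ Disjoint τ υ ∧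
            f = indFn σ + indFn τ + indFn υ - indFn (σ ∪ τ) - indFn (σ ∪ υ)
                - indFn (τ ∪ υ) + indFn (σ ∪ τ ∪ υ)}) with hS
  apply le_antisymm
  · exact Submodule.span_mono (easy_subset G)
  · rw [Submodule.span_le]
    intro T hT
    by_contra hTnot
    obtain ⟨f, hfT, hbot⟩ :=
      Submodule.exists_dual_map_eq_bot_of_notMem hTnot inferInstance
    have hker : Submodule.span ℝ S ≤ LinearMap.ker f :=
      LinearMap.le_ker_iff_map.mpr hbot
    have hvanish : ∀ g ∈ S, f g = 0 := fun g hg =>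
      LinearMap.mem_ker.mp (hker (Submodule.subset_span hg))
    set ℓ : Finset V → ℝ := fun α => f (indFn α) with hℓ
    -- generator memberships
    have g0 : indFn (∅ : Finset V) ∈ S := by
      rw [hS]; left; left; left; rfl
    have g2 : ∀ σ : Finset V, (indFn σ - indFn σᶜ) ∈ S := by
      intro σ; rw [hS]; left; left; right; exact ⟨σ, rfl⟩
    have g3 : ∀ σ τ : Finset V, Disjoint σ τ → (∀ i ∈ σ, ∀ j ∈ τ, ¬ G.Adj i j) →
        (indFn σ + indFn τ - indFn (σ ∪ τ)) ∈ S := by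
      intro σ τ hd hcr; rw [hS]; left; right; exact ⟨σ, τ, hd, hcr, rfl⟩
    have g4 : ∀ σ τ υ : Finset V, Disjoint σ τ → Disjoint σ υ → Disjoint τ υ →
        (indFn σ + indFn τ + indFn υ - indFn (σ ∪ τ) - indFn (σ ∪ υ)
          - indFn (τ ∪ υ) + indFn (σ ∪ τ ∪ υ)) ∈ S := by
      intro σ τ υ d12 d13 d23; rw [hS]; right; exact ⟨σ, τ, υ, d12, d13, d23, rfl⟩
    have h0 : ℓ ∅ = 0 := hvanish _ g0
    have h2 : ∀ σ : Finset V, ℓ σ = ℓ σᶜ := by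
      intro σ
      have := hvanish _ (g2 σ)
      rw [map_sub] at this
      rw [hℓ]; dsimp only; linarith
    have h3 : ∀ σ τ : Finset V, Disjoint σ τ → (∀ i ∈ σ, ∀ j ∈ τ, ¬ G.Adj i j) →
        ℓ σ + ℓ τ = ℓ (σ ∪ τ) := by
      intro σ τ hd hcr
      have := hvanish _ (g3 σ τ hd hcr)
      rw [map_sub, map_add] at this
      rw [hℓ]; dsimp only; linarith
    have h4 : ∀ σ τ υ : Finset V, Disjoint σ τ → Disjoint σ υ → Disjoint τ υ →
        ℓ σ + ℓ τ + ℓ υ - ℓ (σ ∪ τ) - ℓ (σ ∪ υ) - ℓ (τ ∪ υ) + ℓ (σ ∪ τ ∪ υ) = 0 := by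
      intro σ τ υ d12 d13 d23
      have := hvanish _ (g4 σ τ υ d12 d13 d23)
      rw [map_add, map_sub, map_sub, map_sub, map_add, map_add] at this
      rw [hℓ]; dsimp only; linarith
    -- T as a combination of indicators
    have hTrep : T = ∑ α : Finset V, T α • indFn α := by
      funext x
      rw [Finset.sum_apply]
      have : ∀ α : Finset V, (T α • indFn α) x = if x = α then T α else 0 := by
        intro α
        rw [Pi.smul_apply, smul_eq_mul]
        unfold indFn
        split <;> ring
      rw [Finset.sum_congr rfl fun α _ => this α]
      rw [Finset.sum_ite_eq (univ : Finset (Finset V)) x (fun α => T α)]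
      simp
    have hfTval : f T = ∑ α : Finset V, T α * ℓ α := by
      conv_lhs => rw [hTrep]
      rw [map_sum]
      exact Finset.sum_congr rfl fun α _ => by rw [map_smul, smul_eq_mul]
    have := keylemma (G := G) T ℓ hT h0 h2 h3 h4
    rw [← hfTval] at this
    exact hfT this
end

section
/- Let T : 2^V → ℝ be orthogonal to [∅] and to every tripartite function T_{σ,τ,υ} for all pairwise disjoint nonempty σ, τ, υ. Then the Möbius coefficients T̃(η) = Σ_{τ ⊆ η} (-1)^{|η|−|τ|} T(τ) vanish for η = ∅ and for all η with |η| ≥ 3. -/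
/-!
Deleting a point `x ∈ η` turns the Möbius coefficient of `T` at `η` into that of the discrete
derivative `τ ↦ T (τ ∪ {x}) - T τ` at `η \ {x}`. So for `|η| ≥ 3` it suffices that all third
differences of `T` vanish, and these are pairings of `T` with combinations of tripartite
functions and `[∅]`.
-/

open Finset

/-- The tripartite combination `T_{σ,τ,υ}`. -/
def tripFn {V : Type*} [DecidableEq V] (A B C : Finset V) : Finset V → ℝ :=
  indFn A + indFn B + indFn C - indFn (A ∪ B) - indFn (A ∪ C) - indFn (B ∪ C)
    + indFn (A ∪ B ∪ C)

/-- Möbius coefficient `T̃(η) = Σ_{τ ⊆ η} (-1)^{|η|-|τ|} T(τ)`. -/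
def moebiusCoeff {V : Type*} [DecidableEq V] (T : Finset V → ℝ) (η : Finset V) : ℝ :=
  ∑ τ ∈ η.powerset, (-1 : ℝ) ^ (η.card - τ.card) * T τ

section

variable {V : Type*} [DecidableEq V]

lemma sum_mul_indFn [Fintype V] (T : Finset V → ℝ) (σ : Finset V) :
    ∑ α : Finset V, T α * indFn σ α = T σ := by
  simp [indFn, mul_ite]

lemma sum_mul_tripFn [Fintype V] (T : Finset V → ℝ) (A B C : Finset V) :
    ∑ α : Finset V, T α * tripFn A B C α =
      T A + T B + T C - T (A ∪ B) - T (A ∪ C) - T (B ∪ C) + T (A ∪ B ∪ C) := by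
  simp only [tripFn, Pi.add_apply, Pi.sub_apply, mul_add, mul_sub, sum_add_distrib,
    sum_sub_distrib, sum_mul_indFn]

def discreteDeriv (x : V) (T : Finset V → ℝ) : Finset V → ℝ :=
  fun τ => T (insert x τ) - T τ

lemma moebiusCoeff_insert (T : Finset V → ℝ) {x : V} {s : Finset V} (hx : x ∉ s) :
    moebiusCoeff T (insert x s) = moebiusCoeff (discreteDeriv x T) s := by
  unfold moebiusCoeff discreteDeriv
  rw [sum_powerset_insert hx, ← sum_add_distrib]
  refine sum_congr rfl fun t ht => ?_
  have hts : t ⊆ s := mem_powerset.mp ht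
  have hxt : x ∉ t := fun h => hx (hts h)
  have hcard : #t ≤ #s := card_le_card hts
  rw [card_insert_of_notMem hx, card_insert_of_notMem hxt,
    show #s + 1 - #t = #s - #t + 1 by omega, Nat.add_sub_add_right, pow_succ]
  ring

lemma moebiusCoeff_of_mem (T : Finset V → ℝ) {x : V} {η : Finset V} (hx : x ∈ η) :
    moebiusCoeff T η = moebiusCoeff (discreteDeriv x T) (η.erase x) := by
  rw [← moebiusCoeff_insert T (notMem_erase x η), insert_erase hx]

lemma moebiusCoeff_eq_zero_of_forall_subset {T : Finset V → ℝ} {s : Finset V}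
    (hT : ∀ τ ⊆ s, T τ = 0) : moebiusCoeff T s = 0 :=
  sum_eq_zero fun τ hτ => by rw [hT τ (mem_powerset.mp hτ), mul_zero]

/-- For `τ ≠ ∅` this third difference is `T_{τ ∪ {z}, {y}, {x}} - T_{τ, {y}, {x}}` paired with `T`;
for `τ = ∅` it is `T_{{z}, {y}, {x}} - [∅]` paired with `T`. -/
lemma discreteDeriv_three_eq_zero {T : Finset V → ℝ} (h0 : T ∅ = 0)
    (htrip : ∀ A B C : Finset V, A.Nonempty → B.Nonempty → C.Nonempty →
      Disjoint A B → Disjoint A C → Disjoint B C →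
      T A + T B + T C - T (A ∪ B) - T (A ∪ C) - T (B ∪ C) + T (A ∪ B ∪ C) = 0)
    {x y z : V} (hxy : x ≠ y) (hxz : x ≠ z) (hyz : y ≠ z)
    {τ : Finset V} (hx : x ∉ τ) (hy : y ∉ τ) (hz : z ∉ τ) :
    discreteDeriv z (discreteDeriv y (discreteDeriv x T)) τ = 0 := by
  have hzy : Disjoint ({z} : Finset V) {y} := disjoint_singleton.mpr hyz.symm
  have hyx : Disjoint ({y} : Finset V) {x} := disjoint_singleton.mpr hxy.symm
  unfold discreteDeriv
  rcases τ.eq_empty_or_nonempty with rfl | hτ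
  · have h := htrip {z} {y} {x} (singleton_nonempty z) (singleton_nonempty y)
      (singleton_nonempty x) hzy (disjoint_singleton.mpr hxz.symm) hyx
    simp only [union_singleton, insert_empty_eq] at h ⊢
    linarith
  · have h₁ := htrip (insert z τ) {y} {x} (insert_nonempty z τ) (singleton_nonempty y)
      (singleton_nonempty x) (by simp [hyz, hy]) (by simp [hxz, hx]) hyx
    have h₂ := htrip τ {y} {x} hτ (singleton_nonempty y) (singleton_nonempty x)
      (by simp [hy]) (by simp [hx]) hyx
    simp only [union_singleton] at h₁ h₂
    linarith

end

/-- If `T` is orthogonal to `[∅]` and to all tripartite functions for pairwise disjoint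
nonempty triples, then the Möbius coefficients of `T` vanish at `∅` and at all sets of
size at least three. -/
theorem stmt_14 {V : Type*} [Fintype V] [DecidableEq V] (T : Finset V → ℝ)
    (h0 : ∑ α : Finset V, T α * indFn ∅ α = 0)
    (htrip : ∀ σ τ υ : Finset V, σ.Nonempty → τ.Nonempty → υ.Nonempty →
      Disjoint σ τ → Disjoint σ υ → Disjoint τ υ →
      ∑ α : Finset V, T α * tripFn σ τ υ α = 0) :
    moebiusCoeff T ∅ = 0 ∧ ∀ η : Finset V, 3 ≤ η.card → moebiusCoeff T η = 0 := by
  rw [sum_mul_indFn] at h0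
  simp only [sum_mul_tripFn] at htrip
  refine ⟨by simp [moebiusCoeff, h0], fun η hη => ?_⟩
  obtain ⟨x, hx, y, hy, z, hz, hxy, hxz, hyz⟩ := two_lt_card.mp hη
  rw [moebiusCoeff_of_mem T hx, moebiusCoeff_of_mem _ (mem_erase.mpr ⟨hxy.symm, hy⟩),
    moebiusCoeff_of_mem _ (mem_erase.mpr ⟨hyz.symm, mem_erase.mpr ⟨hxz.symm, hz⟩⟩)]
  refine moebiusCoeff_eq_zero_of_forall_subset fun τ hτ => ?_
  exact discreteDeriv_three_eq_zero h0 htrip hxy hxz hyz (fun h => by simpa using hτ h)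
    (fun h => by simpa using hτ h) (fun h => by simpa using hτ h)
end

section
/- Let I be a finite set with |I| ≥ 2 and consider the system of equations, one for each bipartition {a, b} of I into two nonempty parts: Σ_{σ ⊆ I, |σ| even} x_σ ((-1)^{|σ ∩ a|} + (-1)^{|σ ∩ b|}) = 0, in the unknowns (x_σ) indexed by even-order subsets σ ⊆ I. Then the solution space is exactly the set of constant families, i.e. x_σ = x_∅ for all even σ ⊆ I. -/
/-!
Write `χ_a(σ) = (-1)^|σ ∩ a|`. On even sets `χ_{aᶜ} = χ_a`, so the system says exactly that
`F(a) = Σ_{σ even} x_σ χ_a(σ)` vanishes for every `a ≠ ∅, I`. As `χ_∅` and `χ_I` are `1` on even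
sets, orthogonality of the characters gives `2^|I| (x_τ - x_∅) = Σ_a (χ_a(τ) - χ_a(∅)) F(a) = 0`
for even `τ`. Conversely, for a constant family the odd terms may be added for free, and each
equation becomes the sum of the full character sums of the nontrivial characters `χ_a`, `χ_{aᶜ}`.
-/

open Finset

namespace Finset

variable {I R : Type*} [Fintype I] [DecidableEq I] [CommRing R]

theorem neg_one_pow_card_inter_compl (σ a : Finset I) :
    (-1 : R) ^ #(σ ∩ aᶜ) = (-1) ^ #σ * (-1) ^ #(σ ∩ a) := by
  rw [← card_inter_add_card_sdiff σ a, sdiff_eq_inter_compl, pow_add, mul_comm, ← mul_assoc,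
    ← pow_add, ← two_mul, pow_mul, neg_one_sq, one_pow, one_mul]

theorem sum_neg_one_pow_card_inter_mul (σ τ : Finset I) :
    ∑ a : Finset I, (-1 : R) ^ #(σ ∩ a) * (-1) ^ #(τ ∩ a) =
      if σ = τ then 2 ^ Fintype.card I else 0 := by
  set sign : Finset I → I → R := fun σ i => if i ∈ σ then -1 else 1
  have h_prod (σ a : Finset I) : (-1 : R) ^ #(σ ∩ a) = ∏ i ∈ a, sign σ i := by
    rw [prod_ite_mem, prod_const, inter_comm]
  calc ∑ a : Finset I, (-1 : R) ^ #(σ ∩ a) * (-1) ^ #(τ ∩ a)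
      = ∑ a ∈ univ.powerset, ∏ i ∈ a, sign σ i * sign τ i := by
        simp only [powerset_univ, h_prod, prod_mul_distrib]
    _ = ∏ i, (1 + sign σ i * sign τ i) := (prod_one_add _).symm
    _ = if σ = τ then 2 ^ Fintype.card I else 0 := by
        split_ifs with hστ
        · subst hστ
          rw [← card_univ, ← prod_const]
          refine prod_congr rfl fun i _ => ?_
          by_cases hi : i ∈ σ <;> simp [sign, hi, one_add_one_eq_two]
        · obtain ⟨i, hi⟩ := not_forall.mp (mt Finset.ext hστ)
          refine prod_eq_zero (mem_univ i) ?_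
          by_cases hσ : i ∈ σ <;> simp_all [sign]

theorem sum_neg_one_pow_card_inter (a : Finset I) :
    ∑ σ : Finset I, (-1 : R) ^ #(σ ∩ a) = if a = ∅ then 2 ^ Fintype.card I else 0 := by
  simpa [inter_comm] using sum_neg_one_pow_card_inter_mul (R := R) a ∅

theorem sum_neg_one_pow_card_inter_mul_sum {s : Finset (Finset I)} {τ : Finset I} (hτ : τ ∈ s)
    (x : Finset I → R) :
    ∑ a : Finset I, (-1 : R) ^ #(τ ∩ a) * ∑ σ ∈ s, x σ * (-1) ^ #(σ ∩ a) =
      2 ^ Fintype.card I * x τ := by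
  simp_rw [mul_sum]
  rw [sum_comm]
  calc ∑ σ ∈ s, ∑ a : Finset I, (-1 : R) ^ #(τ ∩ a) * (x σ * (-1) ^ #(σ ∩ a))
      = ∑ σ ∈ s, if τ = σ then 2 ^ Fintype.card I * x σ else 0 := by
        refine sum_congr rfl fun σ _ => ?_
        simp_rw [mul_left_comm _ (x σ), ← mul_sum, sum_neg_one_pow_card_inter_mul, mul_ite,
          mul_zero, mul_comm]
    _ = 2 ^ Fintype.card I * x τ := by rw [sum_ite_eq, if_pos hτ]

theorem sum_filter_even_mul_neg_one_pow_card_inter_add_compl (x : Finset I → R) (a : Finset I) :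
    ∑ σ ∈ univ.filter (fun σ : Finset I => Even #σ),
        x σ * ((-1 : R) ^ #(σ ∩ a) + (-1) ^ #(σ ∩ aᶜ)) =
      2 * ∑ σ ∈ univ.filter (fun σ : Finset I => Even #σ), x σ * (-1) ^ #(σ ∩ a) := by
  rw [mul_sum]
  refine sum_congr rfl fun σ hσ => ?_
  rw [neg_one_pow_card_inter_compl, (mem_filter.1 hσ).2.neg_one_pow]
  ring

theorem sum_filter_even_neg_one_pow_card_inter_add_compl {a : Finset I} (ha : a ≠ ∅)
    (ha' : a ≠ univ) :
    ∑ σ ∈ univ.filter (fun σ : Finset I => Even #σ), ((-1 : R) ^ #(σ ∩ a) + (-1) ^ #(σ ∩ aᶜ)) =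
      0 := by
  have hac : aᶜ ≠ ∅ := by rwa [Ne, compl_eq_empty_iff]
  rw [sum_filter_of_ne, sum_add_distrib, sum_neg_one_pow_card_inter, sum_neg_one_pow_card_inter,
    if_neg ha, if_neg hac, add_zero]
  intro σ _ hne
  by_contra hodd
  rw [neg_one_pow_card_inter_compl, (Nat.not_even_iff_odd.1 hodd).neg_one_pow] at hne
  simp at hne

theorem eq_of_sum_filter_even_mul_neg_one_pow_card_inter_eq_zero {K : Type*} [Field K]
    [NeZero (2 : K)] {x : Finset I → K}
    (h : ∀ a : Finset I, a ≠ ∅ → a ≠ univ →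
      ∑ σ ∈ univ.filter (fun σ : Finset I => Even #σ), x σ * (-1) ^ #(σ ∩ a) = 0)
    {τ : Finset I} (hτ : Even #τ) : x τ = x ∅ := by
  set F : Finset I → K := fun a =>
    ∑ σ ∈ univ.filter (fun σ : Finset I => Even #σ), x σ * (-1) ^ #(σ ∩ a)
  have h_inv : (2 : K) ^ Fintype.card I * (x τ - x ∅) =
      ∑ a : Finset I, ((-1) ^ #(τ ∩ a) - (-1) ^ #((∅ : Finset I) ∩ a)) * F a := by
    simp only [sub_mul, sum_sub_distrib, F]
    rw [sum_neg_one_pow_card_inter_mul_sum (by simpa using hτ),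
      sum_neg_one_pow_card_inter_mul_sum (by simp), mul_sub]
  have h_zero (a : Finset I) :
      ((-1 : K) ^ #(τ ∩ a) - (-1) ^ #((∅ : Finset I) ∩ a)) * F a = 0 := by
    by_cases ha : a = ∅
    · simp [ha]
    by_cases ha' : a = univ
    · simp [ha', hτ.neg_one_pow]
    exact mul_eq_zero_of_right _ (h a ha ha')
  rw [sum_eq_zero fun a _ => h_zero a] at h_inv
  exact sub_eq_zero.1 ((mul_eq_zero.1 h_inv).resolve_left (pow_ne_zero _ two_ne_zero))

end Finset

theorem stmt_15_general {I : Type*} [Fintype I] [DecidableEq I]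
    (x : Finset I → ℝ) :
    (∀ a : Finset I, a ≠ ∅ → a ≠ Finset.univ →
      ∑ σ ∈ Finset.univ.filter (fun σ : Finset I => Even σ.card),
        x σ * ((-1 : ℝ) ^ (σ ∩ a).card + (-1 : ℝ) ^ (σ ∩ aᶜ).card) = 0)
    ↔ (∀ σ : Finset I, Even σ.card → x σ = x ∅) := by
  constructor
  · intro h τ hτ
    refine eq_of_sum_filter_even_mul_neg_one_pow_card_inter_eq_zero (fun a ha ha' => ?_) hτ
    have h_two := h a ha ha'
    rw [sum_filter_even_mul_neg_one_pow_card_inter_add_compl] at h_two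
    exact (mul_eq_zero.1 h_two).resolve_left two_ne_zero
  · intro h a ha ha'
    calc ∑ σ ∈ univ.filter (fun σ : Finset I => Even #σ),
          x σ * ((-1 : ℝ) ^ #(σ ∩ a) + (-1) ^ #(σ ∩ aᶜ))
        = x ∅ * ∑ σ ∈ univ.filter (fun σ : Finset I => Even #σ),
            ((-1 : ℝ) ^ #(σ ∩ a) + (-1) ^ #(σ ∩ aᶜ)) := by
          rw [mul_sum]
          exact sum_congr rfl fun σ hσ => by rw [h σ (mem_filter.1 hσ).2]
      _ = 0 := by rw [sum_filter_even_neg_one_pow_card_inter_add_compl ha ha', mul_zero]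

/-- The bipartition equations `Σ_{σ even} x_σ ((-1)^{|σ∩a|} + (-1)^{|σ∩b|}) = 0`, one for each
bipartition `{a, aᶜ}` of `I` into two nonempty parts, hold if and only if the family
`(x_σ)` is constant on even-order subsets. -/
theorem stmt_15 {I : Type*} [Fintype I] [DecidableEq I] (hI : 2 ≤ Fintype.card I)
    (x : Finset I → ℝ) :
    (∀ a : Finset I, a ≠ ∅ → a ≠ Finset.univ →
      ∑ σ ∈ Finset.univ.filter (fun σ : Finset I => Even σ.card),
        x σ * ((-1 : ℝ) ^ (σ ∩ a).card + (-1 : ℝ) ^ (σ ∩ aᶜ).card) = 0)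
    ↔ (∀ σ : Finset I, Even σ.card → x σ = x ∅) :=
  stmt_15_general x
end

section
/- Let σ₁, ..., σ_m be pairwise disjoint nonempty subsets of V and let I_H be a collection of subsets of V (intersections), with I_E the set of even-order subsets contained in some I ∈ I_H. If m is even, then there exists α ∈ I_E with |α ∩ σ_i| odd for all i if and only if some I ∈ I_H intersects every σ_i. If m is odd, such α exists if and only if some I ∈ I_H intersects every σ_i and also contains an element lying in none of the σ_i. -/
open Finset

/-- Characterization of `I_E`-adjacency: for pairwise disjoint nonempty sets
`σ 0, ..., σ (m-1)`, an even-order subset `α` of some intersection `I ∈ I_H` with all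
`|α ∩ σ i|` odd exists iff (for even `m`) some `I ∈ I_H` meets every `σ i`, and
(for odd `m`) some `I ∈ I_H` meets every `σ i` and contains a point in none of them. -/
theorem stmt_18 {V : Type*} [Fintype V] [DecidableEq V] (m : ℕ)
    (σ : Fin m → Finset V) (hne : ∀ i, (σ i).Nonempty)
    (hdisj : ∀ i j, i ≠ j → Disjoint (σ i) (σ j))
    (IH : Finset (Finset V)) :
    (Even m →
      ((∃ α : Finset V, Even α.card ∧ (∃ I ∈ IH, α ⊆ I) ∧
          ∀ i, Odd ((α ∩ σ i).card)) ↔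
        ∃ I ∈ IH, ∀ i, (I ∩ σ i).Nonempty)) ∧
    (Odd m →
      ((∃ α : Finset V, Even α.card ∧ (∃ I ∈ IH, α ⊆ I) ∧
          ∀ i, Odd ((α ∩ σ i).card)) ↔
        ∃ I ∈ IH, (∀ i, (I ∩ σ i).Nonempty) ∧ ∃ x ∈ I, ∀ i, x ∉ σ i)) := by
  classical
  -- forward: α gives that I meets every σ i
  have fwd_meet : ∀ (α I : Finset V), α ⊆ I → (∀ i, Odd ((α ∩ σ i).card)) →
      ∀ i, (I ∩ σ i).Nonempty := by
    intro α I hαI hodd i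
    obtain ⟨x, hx⟩ := card_pos.mp (hodd i).pos
    rw [mem_inter] at hx
    exact ⟨x, mem_inter.mpr ⟨hαI hx.1, hx.2⟩⟩
  -- given a choice function, the image has singleton intersections
  have build : ∀ (I : Finset V) (f : Fin m → V), (∀ i, f i ∈ I ∩ σ i) →
      ((Finset.image f univ).card = m ∧ (Finset.image f univ) ⊆ I ∧
        ∀ i, (Finset.image f univ) ∩ σ i = {f i}) := by
    intro I f hf
    have hI : ∀ i, f i ∈ I := fun i => (mem_inter.mp (hf i)).1
    have hσ : ∀ i, f i ∈ σ i := fun i => (mem_inter.mp (hf i)).2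
    have hinj : Function.Injective f := by
      intro i j h
      by_contra hij
      exact (Finset.disjoint_left.mp (hdisj i j hij)) (hσ i) (h ▸ hσ j)
    refine ⟨?_, ?_, ?_⟩
    · rw [Finset.card_image_of_injective _ hinj, card_univ, Fintype.card_fin]
    · intro x hx
      obtain ⟨j, -, rfl⟩ := mem_image.mp hx
      exact hI j
    · intro i
      ext x
      simp only [mem_inter, mem_image, mem_singleton, mem_univ, true_and]
      constructor
      · rintro ⟨⟨j, rfl⟩, hx⟩
        by_contra h
        have hij : j ≠ i := fun e => h (e ▸ rfl)
        exact (Finset.disjoint_left.mp (hdisj j i hij)) (hσ j) hx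
      · rintro rfl
        exact ⟨⟨i, rfl⟩, hσ i⟩
  -- forward (odd case): there is a point of α (hence of I) outside all σ i
  have fwd_out : ∀ (α I : Finset V), α ⊆ I → Even α.card →
      (∀ i, Odd ((α ∩ σ i).card)) → Odd m → ∃ x ∈ I, ∀ i, x ∉ σ i := by
    intro α I hαI hev hodd hm
    set U : Finset V := univ.biUnion (fun i => α ∩ σ i) with hU
    have hUcard : U.card = ∑ i, (α ∩ σ i).card := by
      apply card_biUnion
      intro i _ j _ hij
      exact (hdisj i j hij).mono inter_subset_right inter_subset_right
    have hUodd : Odd U.card := by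
      rw [Nat.odd_iff, hUcard, Finset.sum_nat_mod]
      have : ∀ i ∈ (univ : Finset (Fin m)), (α ∩ σ i).card % 2 = 1 := by
        intro i _
        exact Nat.odd_iff.mp (hodd i)
      rw [Finset.sum_congr rfl this, Finset.sum_const, card_univ, Fintype.card_fin,
        smul_eq_mul, mul_one]
      exact Nat.odd_iff.mp hm
    have hUsub : U ⊆ α := by
      intro x hx
      obtain ⟨i, -, hxi⟩ := mem_biUnion.mp hx
      exact (mem_inter.mp hxi).1
    have hne' : U ≠ α := by
      intro h
      rw [h] at hUodd
      exact (Nat.not_odd_iff_even.mpr hev) hUodd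
    obtain ⟨x, hxα, hxU⟩ := Finset.exists_of_ssubset (lt_of_le_of_ne hUsub hne')
    refine ⟨x, hαI hxα, fun i hxi => ?_⟩
    exact hxU (mem_biUnion.mpr ⟨i, mem_univ i, mem_inter.mpr ⟨hxα, hxi⟩⟩)
  constructor
  · intro hm
    constructor
    · rintro ⟨α, -, ⟨I, hI, hαI⟩, hodd⟩
      exact ⟨I, hI, fwd_meet α I hαI hodd⟩
    · rintro ⟨I, hI, hmeet⟩
      choose f hf using hmeet
      obtain ⟨hcard, hsub, hsing⟩ := build I f hf
      refine ⟨Finset.image f univ, ?_, ⟨I, hI, hsub⟩, fun i => ?_⟩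
      · rw [hcard]; exact hm
      · rw [hsing i, card_singleton]; exact odd_one
  · intro hm
    constructor
    · rintro ⟨α, hev, ⟨I, hI, hαI⟩, hodd⟩
      exact ⟨I, hI, fwd_meet α I hαI hodd, fwd_out α I hαI hev hodd hm⟩
    · rintro ⟨I, hI, hmeet, x, hxI, hx⟩
      choose f hf using hmeet
      obtain ⟨hcard, hsub, hsing⟩ := build I f hf
      have hxnot : x ∉ Finset.image f univ := by
        intro h
        obtain ⟨j, -, rfl⟩ := mem_image.mp h
        exact hx j (mem_inter.mp (hf j)).2
      refine ⟨insert x (Finset.image f univ), ?_, ⟨I, hI, ?_⟩, fun i => ?_⟩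
      · rw [card_insert_of_notMem hxnot, hcard]
        exact Odd.add_one hm
      · exact insert_subset hxI hsub
      · rw [insert_inter_of_notMem (hx i), hsing i, card_singleton]
        exact odd_one
end
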